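/- Under the OCP update with constant step size η > 0 and bounded scores S_k ∈ [0,B], the empirical coverage converges: lim_{K→∞} (1/K)·Σ_{k=1}^K 𝟙(S_k ≤ q_k) = 1 − α. -/

import Mathlib

/-!
The coverage error of step `k` is `𝟙(S_k > q_k) − α`, and the update turns its partial sums
into a telescoping sum: `η · ∑_{k=1}^K (𝟙(S_k > q_k) − α) = q_{K+1} − q_1`. An above-threshold step
can only happen while `q_k < S_k ≤ B`, and a below-threshold step only while `q_k ≥ S_k ≥ 0`,
so the iterates never leave `[−η, B + η]`. Hence the averaged error is `O(1/K)`.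
-/

open Filter Finset Topology

section OnlineConformal

variable {α η B : ℝ} {S q : ℕ → ℝ}

lemma ocp_step_mem_Icc {s x : ℝ} (hα : α ∈ Set.Icc 0 1) (hη : 0 ≤ η) (hs : s ∈ Set.Icc 0 B)
    (hx : x ∈ Set.Icc (-η) (B + η)) :
    x + η * ((if s > x then (1 : ℝ) else 0) - α) ∈ Set.Icc (-η) (B + η) := by
  obtain ⟨hα0, hα1⟩ := hα
  obtain ⟨hs0, hsB⟩ := hs
  obtain ⟨hxl, hxu⟩ := hx
  split_ifs with hsx
  · constructor <;> nlinarith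
  · constructor <;> nlinarith

lemma ocp_mem_Icc (hα : α ∈ Set.Icc 0 1) (hη : 0 ≤ η) (hS : ∀ k, S k ∈ Set.Icc 0 B)
    (hrec : ∀ k, q (k + 1) = q k + η * ((if S k > q k then (1 : ℝ) else 0) - α))
    (hq1 : q 1 ∈ Set.Icc (-η) (B + η)) {k : ℕ} (hk : 1 ≤ k) :
    q k ∈ Set.Icc (-η) (B + η) := by
  induction k, hk using Nat.le_induction with
  | base => exact hq1
  | succ k _ ih => rw [hrec k]; exact ocp_step_mem_Icc hα hη (hS k) ih

lemma ocp_sum_coverage_eq (hη : η ≠ 0)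
    (hrec : ∀ k, q (k + 1) = q k + η * ((if S k > q k then (1 : ℝ) else 0) - α)) (K : ℕ) :
    ∑ k ∈ Icc 1 K, (if S k ≤ q k then (1 : ℝ) else 0) = K * (1 - α) - (q (K + 1) - q 1) / η := by
  have hcover : ∀ k, (if S k ≤ q k then (1 : ℝ) else 0)
      = (1 - α) - (q (k + 1) - q k) / η := by
    intro k
    rw [hrec k, add_sub_cancel_left, mul_div_cancel_left₀ _ hη]
    by_cases h : S k ≤ q k
    · simp [h, not_lt.2 h]
    · simp [h, lt_of_not_ge h]
  rw [sum_congr rfl fun k _ ↦ hcover k, sum_sub_distrib, ← sum_div, sum_const, Nat.card_Icc,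
    add_tsub_cancel_right, nsmul_eq_mul, ← Ico_add_one_right_eq_Icc, sum_Ico_sub q (by omega)]

end OnlineConformal

theorem stmt_10_general (α η B : ℝ) (hα : α ∈ Set.Ioo (0 : ℝ) 1) (hη : 0 < η)
    (S q : ℕ → ℝ) (hS : ∀ k, S k ∈ Set.Icc 0 B)
    (hrec : ∀ k, q (k + 1) = q k + η * ((if S k > q k then (1 : ℝ) else 0) - α))
    (hq1 : q 1 ∈ Set.Icc (-η) (B + η)) :
    Tendsto (fun K : ℕ =>
        (1 / (K : ℝ)) * (∑ k ∈ Finset.Icc 1 K, (if S k ≤ q k then (1 : ℝ) else 0)))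
      atTop (nhds (1 - α)) := by
  have hdrift_bdd : IsBoundedUnder (· ≤ ·) atTop fun K : ℕ ↦ ‖(q (K + 1) - q 1) / η‖ := by
    refine isBoundedUnder_of ⟨(B + 2 * η) / η, fun K ↦ ?_⟩
    obtain ⟨hl, hu⟩ := ocp_mem_Icc (Set.Ioo_subset_Icc_self hα) hη.le hS hrec hq1 (by omega : 1 ≤ K + 1)
    rw [Real.norm_eq_abs, abs_div, abs_of_pos hη]
    gcongr
    exact abs_le.2 ⟨by linarith [hq1.2], by linarith [hq1.1]⟩
  have herr : Tendsto (fun K : ℕ ↦ 1 / (K : ℝ) * ((q (K + 1) - q 1) / η)) atTop (𝓝 0) :=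
    tendsto_one_div_atTop_nhds_zero_nat.zero_mul_isBoundedUnder_le hdrift_bdd
  refine (sub_zero (1 - α) ▸ tendsto_const_nhds.sub herr).congr' ?_
  filter_upwards [eventually_ne_atTop 0] with K hK
  rw [ocp_sum_coverage_eq hη.ne' hrec K]
  field_simp

theorem stmt_10 (α η B : ℝ) (hα : α ∈ Set.Ioo (0 : ℝ) 1) (hη : 0 < η) (hB : 0 < B)
    (S q : ℕ → ℝ) (hS : ∀ k, S k ∈ Set.Icc 0 B)
    (hrec : ∀ k, q (k + 1) = q k + η * ((if S k > q k then (1 : ℝ) else 0) - α))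
    (hq1 : q 1 ∈ Set.Icc (-η) (B + η)) :
    Tendsto (fun K : ℕ =>
        (1 / (K : ℝ)) * (∑ k ∈ Finset.Icc 1 K, (if S k ≤ q k then (1 : ℝ) else 0)))
      atTop (nhds (1 - α)) :=
  stmt_10_general α η B hα hη S q hS hrec hq1
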